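/- Assume in addition that C is braided monoidal, and let n ≥ 0. Then the class Pol_n of strong polynomial functors of degree ≤ n is closed under the following operations: (1) translation: if F ∈ Pol_n then τ_x(F) ∈ Pol_n for every object x of C; (2) quotients: if F ∈ Pol_n and F → G is an epimorphism in Fct(C, A), then G ∈ Pol_n; (3) extensions: if 0 → F → G → H → 0 is a short exact sequence in Fct(C, A) with F ∈ Pol_n and H ∈ Pol_n, then G ∈ Pol_n. -/

import Mathlib

open CategoryTheory CategoryTheory.Limits CategoryTheory.MonoidalCategory

variable {C : Type*} [Category C] [MonoidalCategory C]
variable {A : Type*} [Category A] [Abelian A]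

/-- The translation endofunctor `τ_x` of `Fct(C, A)`: precomposition with `x ⊗ -`. -/
noncomputable def tauF (A : Type*) [Category A] (x : C) : (C ⥤ A) ⥤ (C ⥤ A) :=
  (Functor.whiskeringLeft C C A).obj (tensorLeft x)

/-- The component `i_x(F) : F ⟶ τ_x F`, whose component at `c` is
`F` applied to `c ≅ 𝟙 ⊗ c ⟶ x ⊗ c`. -/
def iApp (hI : IsInitial (𝟙_ C)) (x : C) (F : C ⥤ A) : F ⟶ tensorLeft x ⋙ F where
  app c := F.map ((λ_ c).inv ≫ hI.to x ▷ c)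
  naturality c c' f := by
    dsimp
    rw [← F.map_comp, ← F.map_comp]
    congr 1
    rw [leftUnitor_inv_naturality_assoc, whisker_exchange, Category.assoc]

/-- The natural transformation `i_x : Id ⟶ τ_x` of endofunctors of `Fct(C, A)`. -/
noncomputable def iNT (hI : IsInitial (𝟙_ C)) (x : C) :
    𝟭 (C ⥤ A) ⟶ tauF A x where
  app F := iApp hI x F
  naturality F G η := by
    ext c
    exact (η.naturality _).symm

/-- The evanescence endofunctor `κ_x = ker(i_x)` of `Fct(C, A)`. -/
noncomputable def kappaF (hI : IsInitial (𝟙_ C)) (x : C) : (C ⥤ A) ⥤ (C ⥤ A) :=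
  kernel (iNT (A := A) hI x)

/-- The difference endofunctor `δ_x = coker(i_x)` of `Fct(C, A)`. -/
noncomputable def deltaF (hI : IsInitial (𝟙_ C)) (x : C) : (C ⥤ A) ⥤ (C ⥤ A) :=
  cokernel (iNT (A := A) hI x)

/-- `PolAux hI (n+1) F` says that `F` is strong polynomial of degree `≤ n`;
`PolAux hI 0 F` says that `F` is the zero functor (degree `≤ -1`). -/
def PolAux (hI : IsInitial (𝟙_ C)) : ℕ → (C ⥤ A) → Prop
  | 0 => fun F => IsZero F
  | n + 1 => fun F => ∀ x : C, PolAux hI n ((deltaF hI x).obj F)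

/-- `Pol hI n F` : `F` is strong polynomial of degree `≤ n` (with `Pol_m = {0}` for `m < 0`). -/
def Pol (hI : IsInitial (𝟙_ C)) (n : ℤ) (F : C ⥤ A) : Prop :=
  PolAux hI (n + 1).toNat F

/-! The difference functor `δ_x` is the cokernel of `i_x : 𝟭 ⟶ τ_x`, a natural transformation
between exact functors, so it is right exact. Hence it carries a right exact sequence
`X₁ ⟶ X₂ ⟶ X₃ ⟶ 0` to a right exact sequence, and induction on the degree shows that the middle
term of such a sequence is in `Pol_n` as soon as the outer ones are; quotients (`X₃ = 0`) and
extensions are special cases. For translations, the braiding `x ⊗ y ⊗ c ≅ y ⊗ x ⊗ c` identifies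
`i_x (τ_y F)` with `τ_y (i_x F)`, whence `δ_x (τ_y F) ≅ τ_y (δ_x F)`. -/

instance tauF_preservesFiniteColimits (x : C) : PreservesFiniteColimits (tauF A x) :=
  ⟨fun _ _ _ => by unfold tauF; infer_instance⟩

instance deltaF_preservesFiniteColimits (hI : IsInitial (𝟙_ C)) (x : C) :
    PreservesFiniteColimits (deltaF (A := A) hI x) := by
  have : PreservesFiniteColimits (parallelPair (iNT (A := A) hI x) 0).flip :=
    ⟨fun J _ _ => preservesColimitsOfShape_of_evaluation _ _ fun j => by
      cases j
      · exact (inferInstance : PreservesColimitsOfShape J (𝟭 (C ⥤ A)))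
      · exact (inferInstance : PreservesColimitsOfShape J (tauF A x))⟩
  exact preservesFiniteColimits_of_natIso (colimitIsoFlipCompColim _).symm

lemma polAux_of_isZero (hI : IsInitial (𝟙_ C)) :
    ∀ (n : ℕ) {F : C ⥤ A}, IsZero F → PolAux hI n F
  | 0, _, hF => hF
  | n + 1, _, hF => fun x => polAux_of_isZero hI n ((deltaF hI x).map_isZero hF)

lemma polAux_of_iso (hI : IsInitial (𝟙_ C)) :
    ∀ (n : ℕ) {F G : C ⥤ A}, (F ≅ G) → PolAux hI n F → PolAux hI n G
  | 0, _, _, e, hF => hF.of_iso e.symm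
  | n + 1, _, _, e, hF => fun x => polAux_of_iso hI n ((deltaF hI x).mapIso e) (hF x)

lemma polAux_X₂_of_exact_of_epi (hI : IsInitial (𝟙_ C)) :
    ∀ (n : ℕ) (S : ShortComplex (C ⥤ A)), S.Exact → Epi S.g →
      PolAux hI n S.X₁ → PolAux hI n S.X₃ → PolAux hI n S.X₂
  | 0, _, hS, _, h₁, h₃ => hS.isZero_of_both_isZero h₁ h₃
  | n + 1, S, hS, hg, h₁, h₃ => fun x =>
      polAux_X₂_of_exact_of_epi hI n (S.map (deltaF hI x))
        (hS.map_of_epi_of_preservesCokernel _ hg inferInstance)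
        ((deltaF hI x).map_epi S.g) (h₁ x) (h₃ x)

open ZeroObject in
lemma polAux_of_epi (hI : IsInitial (𝟙_ C)) (n : ℕ) {F G : C ⥤ A} (p : F ⟶ G) [Epi p]
    (hF : PolAux hI n F) : PolAux hI n G :=
  polAux_X₂_of_exact_of_epi hI n (ShortComplex.mk p (0 : G ⟶ 0) comp_zero)
    ((ShortComplex.exact_iff_epi _ rfl).2 ‹_›) ((isZero_zero _).epi _) hF
    (polAux_of_isZero hI n (isZero_zero _))

noncomputable def deltaFObjIso (hI : IsInitial (𝟙_ C)) (x : C) (F : C ⥤ A) :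
    (deltaF hI x).obj F ≅ cokernel (iApp hI x F) :=
  PreservesCokernel.iso ((evaluation (C ⥤ A) (C ⥤ A)).obj F) (iNT hI x)

section Braided

variable [BraidedCategory C]

lemma whiskerRight_braiding_of_unit {x : C} (u : 𝟙_ C ⟶ x) (y c : C) :
    (λ_ (y ⊗ c)).inv ≫ u ▷ (y ⊗ c) ≫ (α_ x y c).inv ≫ (β_ x y).hom ▷ c ≫ (α_ y x c).hom
      = y ◁ ((λ_ c).inv ≫ u ▷ c) := by
  rw [associator_inv_naturality_left_assoc, ← comp_whiskerRight_assoc,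
    BraidedCategory.braiding_naturality_left]
  have hβ : (β_ (𝟙_ C) y).hom = (λ_ y).hom ≫ (ρ_ y).inv := by
    rw [← braiding_rightUnitor y, Category.assoc, Iso.hom_inv_id, Category.comp_id]
  simp [hβ]

noncomputable def tensorLeftCommIso (x y : C) :
    tensorLeft y ⋙ tensorLeft x ≅ tensorLeft x ⋙ tensorLeft y :=
  NatIso.ofComponents (fun c => (α_ x y c).symm ≪≫ whiskerRightIso (β_ x y) c ≪≫ α_ y x c)
    fun f => by
      dsimp
      simp only [whiskerRightIso_hom]
      rw [associator_inv_naturality_right_assoc, whisker_exchange_assoc,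
        associator_naturality_right]
      simp only [Category.assoc]

lemma tauF_map_iApp_comp_tensorLeftCommIso {D : Type*} [Category D] (hI : IsInitial (𝟙_ C))
    (x y : C) (F : C ⥤ D) :
    (tauF D y).map (iApp hI x F) ≫ (Functor.isoWhiskerRight (tensorLeftCommIso x y) F).hom =
      iApp hI x ((tauF D y).obj F) := by
  ext c
  dsimp [tauF, iApp, tensorLeftCommIso]
  rw [← F.map_comp]
  simpa only [Category.assoc, whiskerRightIso_hom] using
    congrArg F.map (whiskerRight_braiding_of_unit (hI.to x) y c)

noncomputable def tauFDeltaFIso (hI : IsInitial (𝟙_ C)) (x y : C) (F : C ⥤ A) :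
    (tauF A y).obj ((deltaF hI x).obj F) ≅ (deltaF hI x).obj ((tauF A y).obj F) :=
  (tauF A y).mapIso (deltaFObjIso hI x F) ≪≫ PreservesCokernel.iso (tauF A y) (iApp hI x F) ≪≫
    cokernel.mapIso _ _ (Iso.refl _) (Functor.isoWhiskerRight (tensorLeftCommIso x y) F)
      ((tauF_map_iApp_comp_tensorLeftCommIso hI x y F).trans (Category.id_comp _).symm) ≪≫
    (deltaFObjIso hI x ((tauF A y).obj F)).symm

lemma polAux_tauF_obj (hI : IsInitial (𝟙_ C)) :
    ∀ (n : ℕ) {F : C ⥤ A} (y : C), PolAux hI n F → PolAux hI n ((tauF A y).obj F)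
  | 0, _, y, hF => Functor.isZero _ fun c => hF.obj (y ⊗ c)
  | n + 1, F, y, hF => fun x =>
      polAux_of_iso hI n (tauFDeltaFIso hI x y F) (polAux_tauF_obj hI n y (hF x))

end Braided

/-- `Pol_n` is closed under translation, quotients and extensions. -/
theorem pol_closure [BraidedCategory C] (hI : IsInitial (𝟙_ C)) (n : ℕ) :
    (∀ (F : C ⥤ A) (x : C), Pol hI n F → Pol hI n ((tauF A x).obj F)) ∧
    (∀ (F G : C ⥤ A) (p : F ⟶ G), Epi p → Pol hI n F → Pol hI n G) ∧
    (∀ S : ShortComplex (C ⥤ A), S.ShortExact →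
      Pol hI n S.X₁ → Pol hI n S.X₃ → Pol hI n S.X₂) := by
  have hdeg : ((n : ℤ) + 1).toNat = n + 1 := by omega
  simp only [Pol, hdeg]
  exact ⟨fun F x => polAux_tauF_obj hI _ x, fun F G p _ => polAux_of_epi hI _ p,
    fun S hS => polAux_X₂_of_exact_of_epi hI _ S hS.exact hS.epi_g⟩
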